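/- For a profinite set S, a commutative ring A, and a point s ∈ S, the evaluation map LC(S,A) → A, f ↦ f(s), is a flat ring homomorphism. -/

import Mathlib

/-!
Evaluation at `s` identifies `A` with the localization of `LC(S, A)` at the functions equal to `1`
at `s`: it is surjective via the constant functions, and a function `f` vanishing at `s` is killed
by the characteristic function of the clopen set `f⁻¹' {0}`, which is `1` at `s`. Localizations
are flat.
-/

theorem RingHom.Flat.of_surjective_of_forall_exists_mul_eq_zero {R S : Type*} [CommRing R]
    [CommRing S] (f : R →+* S) (hf : Function.Surjective f)
    (hker : ∀ x, f x = 0 → ∃ e, f e = 1 ∧ e * x = 0) : f.Flat := by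
  let _ := f.toAlgebra
  let M : Submonoid R := (⊥ : Submonoid S).comap f
  have : IsLocalization M S :=
    { map_units := fun ⟨m, hm⟩ => by
        rw [Submonoid.mem_comap, Submonoid.mem_bot] at hm
        exact hm ▸ isUnit_one
      surj := fun z => by
        obtain ⟨x, rfl⟩ := hf z
        exact ⟨(x, 1), by simp [RingHom.algebraMap_toAlgebra]⟩
      exists_of_eq := fun {x y} hxy => by
        obtain ⟨e, he, hex⟩ := hker (x - y) (by rw [map_sub, sub_eq_zero]; exact hxy)
        refine ⟨⟨e, Submonoid.mem_bot.mpr he⟩, ?_⟩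
        rwa [← sub_eq_zero, ← mul_sub] }
  exact IsLocalization.flat S M

namespace LocallyConstant

variable {X Y : Type*} [TopologicalSpace X] [CommRing Y]

theorem exists_eq_one_mul_eq_zero {f : LocallyConstant X Y} {x : X} (hfx : f x = 0) :
    ∃ e : LocallyConstant X Y, e x = 1 ∧ e * f = 0 := by
  have hU : IsClopen (f ⁻¹' {0}) := f.isLocallyConstant.isClopen_fiber 0
  refine ⟨charFn Y hU, by simp [coe_charFn, hfx], ?_⟩
  ext y
  by_cases hy : f y = 0 <;> simp [coe_charFn, hy]

end LocallyConstant

theorem locallyConstant_evalRingHom_flat (S : Type*) [TopologicalSpace S] (A : Type*) [CommRing A]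
    (s : S) :
    (LocallyConstant.evalRingHom (X := S) (Y := A) s).Flat :=
  .of_surjective_of_forall_exists_mul_eq_zero _
    (fun a => ⟨.const S a, rfl⟩) fun _ hf => LocallyConstant.exists_eq_one_mul_eq_zero hf
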